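/- arXiv:1301.6465 — 4 statements merged into one kernel-verified Lean document; each statement's English description precedes it below -/
import Mathlib

section
/- Let A be a finite nonempty alphabet, let b ≥ 2 be an integer, and let ℓ : A → ℝ be a function satisfying Kraft's inequality ∑_{a ∈ A} b^{-ℓ(a)} ≤ 1. Then for every ε > 0 there exists an integer n ≥ 1 and a prefix-free code κ : (Fin n → A) → List (Fin b) such that for every block w : Fin n → A one has |(length of κ(w)) − ∑_{i} ℓ(w i)| ≤ n·ε. -/
/-!
Round the summed lengths of blocks of length `n` up to integers. Since Kraft's sum is
multiplicative over blocks, the rounded lengths still satisfy Kraft's inequality, so by the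
converse of Kraft's inequality they are the lengths of a prefix-free code. Rounding costs less
than one symbol per block, which is at most `n * ε` once `n ≥ 1 / ε`.

The converse of Kraft's inequality is proved by adding codewords in order of increasing length:
the words of length `m` that extend one of the earlier codewords `κ x` number at most
`∑ₓ D ^ (m - |κ x|) < D ^ m`, so some word of length `m` extends none of them.
-/

open Finset

section PrefixCode

variable {α : Type*} [Fintype α]

theorem card_vector_filter_isPrefix_le [DecidableEq α] (u : List α) (n : ℕ) :
    #{v : List.Vector α n | u <+: v.toList} ≤ Fintype.card α ^ (n - u.length) := by
  calc #{v : List.Vector α n | u <+: v.toList}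
      ≤ #(univ : Finset (List.Vector α (n - u.length))) := by
        refine card_le_card_of_injOn (fun v => ⟨v.toList.drop u.length, by simp⟩)
          (fun _ _ => mem_univ _) ?_
        intro v hv v' hv' hvv'
        simp only [coe_filter, mem_univ, true_and, Set.mem_ofPred_eq] at hv hv'
        apply List.Vector.toList_injective
        rw [← List.prefix_iff_eq_append.mp hv, ← List.prefix_iff_eq_append.mp hv']
        exact congrArg (u ++ ·) (congrArg List.Vector.toList hvv')
    _ = Fintype.card α ^ (n - u.length) := by rw [card_univ, card_vector]

theorem exists_vector_forall_not_isPrefix {ι : Type*} (s : Finset ι) (u : ι → List α)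
    (n : ℕ) (h : ∑ i ∈ s, Fintype.card α ^ (n - (u i).length) < Fintype.card α ^ n) :
    ∃ v : List.Vector α n, ∀ i ∈ s, ¬ u i <+: v.toList := by
  classical
  by_contra! hcover
  have hsub : (univ : Finset (List.Vector α n)) ⊆
      s.biUnion fun i => {v : List.Vector α n | u i <+: v.toList} := by
    intro v _
    obtain ⟨i, hi, hpre⟩ := hcover v
    exact mem_biUnion.mpr ⟨i, hi, mem_filter.mpr ⟨mem_univ _, hpre⟩⟩
  refine h.not_ge ?_
  calc Fintype.card α ^ n
      = #(univ : Finset (List.Vector α n)) := by simp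
    _ ≤ #(s.biUnion fun i => {v : List.Vector α n | u i <+: v.toList}) := card_le_card hsub
    _ ≤ ∑ i ∈ s, #{v : List.Vector α n | u i <+: v.toList} := card_biUnion_le
    _ ≤ ∑ i ∈ s, Fintype.card α ^ (n - (u i).length) :=
        sum_le_sum fun i _ => card_vector_filter_isPrefix_le (u i) n

theorem sum_pow_sub_lt_pow_of_kraft {ι : Type*} {D : ℕ} (hD : 0 < D) (s : Finset ι) (L : ι → ℕ)
    (m : ℕ) (hle : ∀ i ∈ s, L i ≤ m) (h : ((D : ℝ) ^ m)⁻¹ + ∑ i ∈ s, ((D : ℝ) ^ L i)⁻¹ ≤ 1) :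
    ∑ i ∈ s, D ^ (m - L i) < D ^ m := by
  have hDm : (0 : ℝ) < (D : ℝ) ^ m := by positivity
  have hsum : (∑ i ∈ s, D ^ (m - L i) : ℝ) = (D : ℝ) ^ m * ∑ i ∈ s, ((D : ℝ) ^ L i)⁻¹ := by
    rw [mul_sum]
    exact sum_congr rfl fun i hi => pow_sub₀ _ (by positivity) (hle i hi)
  have : (D : ℝ) ^ m * ∑ i ∈ s, ((D : ℝ) ^ L i)⁻¹ ≤ (D : ℝ) ^ m - 1 := by
    have := mul_le_mul_of_nonneg_left (le_sub_iff_add_le'.mpr h) hDm.le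
    rwa [mul_sub, mul_one, mul_inv_cancel₀ hDm.ne'] at this
  exact_mod_cast (hsum.trans_le this).trans_lt (sub_one_lt _)

theorem exists_prefixFree_of_kraft [Nonempty α] {ι : Type*} (s : Finset ι) (L : ι → ℕ)
    (h : ∑ i ∈ s, ((Fintype.card α : ℝ) ^ L i)⁻¹ ≤ 1) :
    ∃ κ : ι → List α, (∀ i ∈ s, (κ i).length = L i) ∧
      ∀ i ∈ s, ∀ j ∈ s, i ≠ j → ¬ κ i <+: κ j := by
  classical
  induction s using Finset.induction_on_max_value L with
  | empty => exact ⟨fun _ => [], by simp, by simp⟩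
  | insert a s ha hmax ih =>
    rw [sum_insert ha] at h
    obtain ⟨κ, hlen, hpf⟩ :=
      ih (by linarith [(by positivity : (0 : ℝ) ≤ ((Fintype.card α : ℝ) ^ L a)⁻¹)])
    obtain ⟨v, hv⟩ := exists_vector_forall_not_isPrefix s κ (L a) <| by
      rw [sum_congr rfl fun x hx => by rw [hlen x hx]]
      exact sum_pow_sub_lt_pow_of_kraft Fintype.card_pos s L (L a) hmax h
    have hne : ∀ x ∈ s, x ≠ a := fun x hx hxa => ha (hxa ▸ hx)
    refine ⟨Function.update κ a v.toList, ?_, ?_⟩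
    · intro i hi
      rcases mem_insert.mp hi with rfl | his
      · simp
      · simp [hne i his, hlen i his]
    · intro i hi j hj hij
      rcases mem_insert.mp hi with rfl | his <;> rcases mem_insert.mp hj with rfl | hjs
      · exact absurd rfl hij
      · rw [Function.update_self, Function.update_of_ne (hne j hjs)]
        intro hpre
        have hlen_le : (κ j).length ≤ v.toList.length := by simpa [hlen j hjs] using hmax j hjs
        exact hv j hjs (hpre.eq_of_length_le hlen_le ▸ List.prefix_refl _)
      · rw [Function.update_self, Function.update_of_ne (hne i his)]
        exact hv i his
      · rw [Function.update_of_ne (hne i his), Function.update_of_ne (hne j hjs)]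
        exact hpf i his j hjs hij

theorem exists_prefixFree_length_eq_ceil_of_kraft [Nonempty α] {ι : Type*} [Fintype ι]
    (ℓ : ι → ℝ) (h : ∑ i, (Fintype.card α : ℝ) ^ (-ℓ i) ≤ 1) :
    ∃ κ : ι → List α, (∀ i, (κ i).length = ⌈ℓ i⌉₊) ∧ ∀ i j, i ≠ j → ¬ κ i <+: κ j := by
  have hD : (1 : ℝ) ≤ Fintype.card α := by exact_mod_cast Fintype.card_pos
  obtain ⟨κ, hlen, hpf⟩ := exists_prefixFree_of_kraft (α := α) univ (fun i => ⌈ℓ i⌉₊) <| by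
    refine le_trans (sum_le_sum fun i _ => ?_) h
    rw [← Real.rpow_natCast, ← Real.rpow_neg (by positivity)]
    exact Real.rpow_le_rpow_of_exponent_le hD (neg_le_neg (Nat.le_ceil _))
  exact ⟨κ, fun i => hlen i (mem_univ i), fun i j => hpf i (mem_univ i) j (mem_univ j)⟩

end PrefixCode

theorem Real.sum_rpow_neg_sum_eq_pow {A : Type*} [Fintype A] {b : ℝ} (hb : 0 < b) (ℓ : A → ℝ)
    (n : ℕ) : ∑ w : Fin n → A, b ^ (-∑ i, ℓ (w i)) = (∑ a, b ^ (-ℓ a)) ^ n := by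
  rw [Fintype.sum_pow]
  refine sum_congr rfl fun w _ => ?_
  rw [← sum_neg_distrib, Real.rpow_sum_of_pos hb]

theorem nonneg_of_kraft {A : Type*} [Fintype A] {b : ℝ} (hb : 1 < b) (ℓ : A → ℝ)
    (h : ∑ a, b ^ (-ℓ a) ≤ 1) (a : A) : 0 ≤ ℓ a := by
  have : b ^ (-ℓ a) ≤ b ^ (0 : ℝ) := by
    rw [Real.rpow_zero]
    exact (single_le_sum (fun a _ => by positivity) (mem_univ a)).trans h
  linarith [(Real.rpow_le_rpow_left_iff hb).mp this]

theorem kraft_implies_block_code_general {A : Type*} [Fintype A]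
    (b : ℕ) (hb : 2 ≤ b) (ℓ : A → ℝ)
    (hKraft : ∑ a : A, (b : ℝ) ^ (-(ℓ a)) ≤ 1) :
    ∀ ε > 0, ∃ n : ℕ, 1 ≤ n ∧ ∃ κ : (Fin n → A) → List (Fin b),
      (∀ w₁ w₂ : Fin n → A, w₁ ≠ w₂ → ¬ (κ w₁ <+: κ w₂)) ∧
      (∀ w : Fin n → A, |((κ w).length : ℝ) - ∑ i, ℓ (w i)| ≤ n * ε) := by
  intro ε hε
  obtain ⟨m, hm⟩ := exists_nat_one_div_lt hε
  have hb1 : (1 : ℝ) < b := by exact_mod_cast hb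
  have hnε : 1 ≤ ((m + 1 : ℕ) : ℝ) * ε := by
    push_cast
    rw [div_lt_iff₀ (by positivity)] at hm
    linarith
  have : NeZero b := ⟨by omega⟩
  obtain ⟨κ, hlen, hpf⟩ := exists_prefixFree_length_eq_ceil_of_kraft (α := Fin b)
    (fun w : Fin (m + 1) → A => ∑ i, ℓ (w i)) <| by
      rw [Fintype.card_fin, Real.sum_rpow_neg_sum_eq_pow (by positivity)]
      exact pow_le_one₀ (sum_nonneg fun a _ => by positivity) hKraft
  refine ⟨m + 1, by omega, κ, hpf, fun w => ?_⟩
  have hsum : 0 ≤ ∑ i, ℓ (w i) := sum_nonneg fun i _ => nonneg_of_kraft hb1 ℓ hKraft (w i)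
  rw [hlen, abs_le]
  constructor <;> linarith [Nat.le_ceil (∑ i, ℓ (w i)), Nat.ceil_lt_add_one hsum]

/-- If a real-valued length function `ℓ` on a finite nonempty alphabet `A`
satisfies Kraft's inequality for an output alphabet of size `b ≥ 2`, then for every `ε > 0`
there is a block length `n ≥ 1` and a prefix-free fixed-to-variable length block code
`κ : (Fin n → A) → List (Fin b)` whose codeword lengths differ from the summed lengths
`∑ i, ℓ (w i)` by at most `n * ε`. -/
theorem kraft_implies_block_code {A : Type*} [Fintype A] [Nonempty A]
    (b : ℕ) (hb : 2 ≤ b) (ℓ : A → ℝ)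
    (hKraft : ∑ a : A, (b : ℝ) ^ (-(ℓ a)) ≤ 1) :
    ∀ ε > 0, ∃ n : ℕ, 1 ≤ n ∧ ∃ κ : (Fin n → A) → List (Fin b),
      (∀ w₁ w₂ : Fin n → A, w₁ ≠ w₂ → ¬ (κ w₁ <+: κ w₂)) ∧
      (∀ w : Fin n → A, |((κ w).length : ℝ) - ∑ i, ℓ (w i)| ≤ n * ε) :=
  kraft_implies_block_code_general b hb ℓ hKraft
end

section
/- Let A be a finite nonempty alphabet, let b ≥ 2 be an integer, and let ℓ : A → ℝ be a function. Suppose that for every ε > 0 there exists an integer n ≥ 1 and a uniquely decodable code κ : (Fin n → A) → List (Fin b) such that for every block w : Fin n → A one has |(length of κ(w)) − ∑_{i} ℓ(w i)| ≤ n·ε. Then ℓ satisfies Kraft's inequality ∑_{a ∈ A} b^{-ℓ(a)} ≤ 1. -/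
open Finset

/-- McMillan's inequality: a uniquely decodable code satisfies Kraft's inequality
(with natural-number codeword lengths). -/
lemma mcmillan {W : Type*} [Fintype W] {b : ℕ} (hb : 2 ≤ b) (κ : W → List (Fin b))
    (hinj : Function.Injective (fun L : List W => (L.map κ).flatten)) :
    ∑ w : W, ((b : ℝ)⁻¹) ^ (κ w).length ≤ 1 := by
  classical
  have hb0 : (0 : ℝ) < b := by positivity
  set c : W → ℕ := fun w => (κ w).length with hc
  set M : ℕ := Finset.univ.sup c with hM
  set S : ℝ := ∑ w : W, ((b : ℝ)⁻¹) ^ (c w) with hS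
  have hS0 : 0 ≤ S := Finset.sum_nonneg fun w _ => by positivity
  -- length of the concatenated codeword for a tuple
  have hlen : ∀ (k : ℕ) (f : Fin k → W),
      (((List.ofFn f).map κ).flatten).length = ∑ i, c (f i) := by
    intro k f
    simp [List.length_flatten, List.map_ofFn, List.sum_ofFn, Function.comp, hc]
  -- the key cardinality bound: tuples with total code length m
  have hcard : ∀ (k m : ℕ),
      (Finset.univ.filter (fun f : Fin k → W => (∑ i, c (f i)) = m)).card ≤ b ^ m := by
    intro k m
    have hinj' : ∀ f₁ ∈ Finset.univ.filter (fun f : Fin k → W => (∑ i, c (f i)) = m),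
        ∀ f₂ ∈ Finset.univ.filter (fun f : Fin k → W => (∑ i, c (f i)) = m),
        (((List.ofFn f₁).map κ).flatten) = (((List.ofFn f₂).map κ).flatten) → f₁ = f₂ := by
      intro f₁ _ f₂ _ hf
      exact List.ofFn_injective (hinj hf)
    have hmaps : ∀ f ∈ Finset.univ.filter (fun f : Fin k → W => (∑ i, c (f i)) = m),
        (((List.ofFn f).map κ).flatten) ∈
          (Finset.univ : Finset (List.Vector (Fin b) m)).image List.Vector.toList := by
      intro f hf
      rw [Finset.mem_filter] at hf
      refine Finset.mem_image.2 ⟨⟨_, ?_⟩, Finset.mem_univ _, rfl⟩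
      rw [hlen k f, hf.2]
    calc (Finset.univ.filter (fun f : Fin k → W => (∑ i, c (f i)) = m)).card
        ≤ ((Finset.univ : Finset (List.Vector (Fin b) m)).image List.Vector.toList).card :=
          Finset.card_le_card_of_injOn _ hmaps hinj'
      _ ≤ (Finset.univ : Finset (List.Vector (Fin b) m)).card := Finset.card_image_le
      _ = b ^ m := by rw [Finset.card_univ, card_vector, Fintype.card_fin]
  -- the key power bound
  have key : ∀ k : ℕ, S ^ k ≤ (k * M + 1 : ℝ) := by
    intro k
    have h1 : S ^ k = ∑ f : Fin k → W, ((b : ℝ)⁻¹) ^ (∑ i, c (f i)) := by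
      rw [hS, Finset.sum_pow', Fintype.piFinset_univ]
      refine Finset.sum_congr rfl fun f _ => ?_
      rw [Finset.prod_pow_eq_pow_sum]
    have hmaps : ∀ f ∈ (Finset.univ : Finset (Fin k → W)),
        (∑ i, c (f i)) ∈ Finset.range (k * M + 1) := by
      intro f _
      rw [Finset.mem_range, Nat.lt_succ_iff]
      calc ∑ i, c (f i) ≤ ∑ _i : Fin k, M :=
            Finset.sum_le_sum fun i _ => Finset.le_sup (Finset.mem_univ _)
        _ = k * M := by simp [Finset.sum_const, Finset.card_univ, Nat.smul_one_eq_cast]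
    rw [h1, ← Finset.sum_fiberwise_of_maps_to hmaps]
    have hb1 : ∀ m ∈ Finset.range (k * M + 1),
        (∑ f ∈ Finset.univ.filter (fun f : Fin k → W => (∑ i, c (f i)) = m),
          ((b : ℝ)⁻¹) ^ (∑ i, c (f i))) ≤ 1 := by
      intro m _
      have heq : ∀ f ∈ Finset.univ.filter (fun f : Fin k → W => (∑ i, c (f i)) = m),
          ((b : ℝ)⁻¹) ^ (∑ i, c (f i)) = ((b : ℝ)⁻¹) ^ m := by
        intro f hf
        rw [(Finset.mem_filter.1 hf).2]
      rw [Finset.sum_congr rfl heq, Finset.sum_const, nsmul_eq_mul]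
      calc ((Finset.univ.filter (fun f : Fin k → W => (∑ i, c (f i)) = m)).card : ℝ)
            * ((b : ℝ)⁻¹) ^ m
          ≤ (b : ℝ) ^ m * ((b : ℝ)⁻¹) ^ m := by
            refine mul_le_mul_of_nonneg_right ?_ (by positivity)
            exact_mod_cast hcard k m
        _ = 1 := by rw [← mul_pow, mul_inv_cancel₀ (ne_of_gt hb0), one_pow]
    calc (∑ m ∈ Finset.range (k * M + 1),
          ∑ f ∈ Finset.univ.filter (fun f : Fin k → W => (∑ i, c (f i)) = m),
            ((b : ℝ)⁻¹) ^ (∑ i, c (f i)))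
        ≤ ∑ _m ∈ Finset.range (k * M + 1), (1 : ℝ) := Finset.sum_le_sum hb1
      _ = (k * M + 1 : ℝ) := by simp
  -- conclude S ≤ 1
  by_contra hS1
  push_neg at hS1
  have htend := tendsto_pow_const_div_const_pow_of_one_lt 1 hS1
  have hM1 : (0 : ℝ) < (M : ℝ) + 1 := by positivity
  have hev : ∀ᶠ n : ℕ in Filter.atTop, ((n : ℝ) ^ 1 / S ^ n) < ((M : ℝ) + 1)⁻¹ :=
    htend.eventually_lt_const (by positivity)
  obtain ⟨n, hlt, hn1⟩ := (hev.and (Filter.eventually_ge_atTop 1)).exists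
  have hSn : 0 < S ^ n := pow_pos (lt_trans one_pos hS1) n
  rw [pow_one, div_lt_iff₀ hSn] at hlt
  have h2 : S ^ n ≤ (n : ℝ) * M + 1 := key n
  have h3 : ((n : ℝ)) * M + 1 ≤ (n : ℝ) * ((M : ℝ) + 1) := by
    have : (1 : ℝ) ≤ n := by exact_mod_cast hn1
    nlinarith
  have h4 : S ^ n < ((M : ℝ) + 1)⁻¹ * S ^ n * ((M : ℝ) + 1) := by
    calc S ^ n ≤ (n : ℝ) * ((M : ℝ) + 1) := le_trans h2 h3
      _ < (((M : ℝ) + 1)⁻¹ * S ^ n) * ((M : ℝ) + 1) :=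
        mul_lt_mul_of_pos_right hlt hM1
  rw [mul_comm (((M : ℝ) + 1)⁻¹) (S ^ n), mul_assoc, inv_mul_cancel₀ (ne_of_gt hM1),
    mul_one] at h4
  exact lt_irrefl _ h4

/-- If for every `ε > 0` there is a block length `n ≥ 1` and a uniquely
decodable fixed-to-variable length block code `κ : (Fin n → A) → List (Fin b)` whose
codeword lengths differ from the summed lengths `∑ i, ℓ (w i)` by at most `n * ε`,
then `ℓ` satisfies Kraft's inequality. Unique decodability means that the extension of
`κ` to finite sequences of blocks by concatenation is injective. -/
theorem block_code_implies_kraft {A : Type*} [Fintype A] [Nonempty A]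
    (b : ℕ) (hb : 2 ≤ b) (ℓ : A → ℝ)
    (h : ∀ ε > 0, ∃ n : ℕ, 1 ≤ n ∧ ∃ κ : (Fin n → A) → List (Fin b),
      Function.Injective (fun L : List (Fin n → A) => (L.map κ).flatten) ∧
      (∀ w : Fin n → A, |((κ w).length : ℝ) - ∑ i, ℓ (w i)| ≤ n * ε)) :
    ∑ a : A, (b : ℝ) ^ (-(ℓ a)) ≤ 1 := by
  classical
  have hb0 : (0 : ℝ) < b := by positivity
  have hb1 : (1 : ℝ) < b := by exact_mod_cast lt_of_lt_of_le one_lt_two (by exact_mod_cast hb)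
  set S : ℝ := ∑ a : A, (b : ℝ) ^ (-(ℓ a)) with hSdef
  have hS0 : 0 ≤ S := Finset.sum_nonneg fun a _ => Real.rpow_nonneg (le_of_lt hb0) _
  -- main estimate: S ≤ b ^ ε for every ε > 0
  have main : ∀ ε : ℝ, 0 < ε → S ≤ (b : ℝ) ^ ε := by
    intro ε hε
    obtain ⟨n, hn1, κ, hinj, happrox⟩ := h ε hε
    have hT : ∑ w : Fin n → A, ((b : ℝ)⁻¹) ^ (κ w).length ≤ 1 := mcmillan hb κ hinj
    -- S ^ n as a sum over blocks
    have h1 : S ^ n = ∑ w : Fin n → A, (b : ℝ) ^ (-(∑ i, ℓ (w i))) := by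
      rw [hSdef, Finset.sum_pow', Fintype.piFinset_univ]
      refine Finset.sum_congr rfl fun w _ => ?_
      rw [← Real.rpow_sum_of_pos hb0, ← Finset.sum_neg_distrib]
    -- termwise bound
    have h2 : ∀ w : Fin n → A,
        (b : ℝ) ^ (-(∑ i, ℓ (w i))) ≤ (b : ℝ) ^ ((n : ℝ) * ε) * ((b : ℝ)⁻¹) ^ (κ w).length := by
      intro w
      have habs := abs_le.1 (happrox w)
      have hle : -(∑ i, ℓ (w i)) ≤ (n : ℝ) * ε + (-((κ w).length : ℝ)) := by
        linarith [habs.1]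
      calc (b : ℝ) ^ (-(∑ i, ℓ (w i)))
          ≤ (b : ℝ) ^ ((n : ℝ) * ε + (-((κ w).length : ℝ))) :=
            Real.rpow_le_rpow_of_exponent_le (le_of_lt hb1) hle
        _ = (b : ℝ) ^ ((n : ℝ) * ε) * ((b : ℝ)⁻¹) ^ (κ w).length := by
            rw [Real.rpow_add hb0, Real.rpow_neg (le_of_lt hb0), Real.rpow_natCast, inv_pow]
    have h3 : S ^ n ≤ (b : ℝ) ^ ((n : ℝ) * ε) := by
      calc S ^ n = ∑ w : Fin n → A, (b : ℝ) ^ (-(∑ i, ℓ (w i))) := h1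
        _ ≤ ∑ w : Fin n → A, (b : ℝ) ^ ((n : ℝ) * ε) * ((b : ℝ)⁻¹) ^ (κ w).length :=
            Finset.sum_le_sum fun w _ => h2 w
        _ = (b : ℝ) ^ ((n : ℝ) * ε) * ∑ w : Fin n → A, ((b : ℝ)⁻¹) ^ (κ w).length := by
            rw [Finset.mul_sum]
        _ ≤ (b : ℝ) ^ ((n : ℝ) * ε) * 1 :=
            mul_le_mul_of_nonneg_left hT (Real.rpow_nonneg (le_of_lt hb0) _)
        _ = (b : ℝ) ^ ((n : ℝ) * ε) := mul_one _
    have h4 : S ^ n ≤ ((b : ℝ) ^ ε) ^ n := by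
      rw [← Real.rpow_natCast ((b : ℝ) ^ ε) n, ← Real.rpow_mul (le_of_lt hb0), mul_comm ε]
      exact h3
    exact le_of_pow_le_pow_left₀ (Nat.one_le_iff_ne_zero.1 hn1)
      (Real.rpow_nonneg (le_of_lt hb0) _) h4
  -- conclude S ≤ 1 by letting ε → 0
  by_contra hS1
  push_neg at hS1
  have hlogS : 0 < Real.log S := Real.log_pos hS1
  have hlogb : 0 < Real.log b := Real.log_pos hb1
  set ε : ℝ := Real.log S / (2 * Real.log b) with hεdef
  have hε : 0 < ε := by positivity
  have hbe : (b : ℝ) ^ ε < S := by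
    rw [Real.rpow_def_of_pos hb0]
    have : Real.log b * ε = Real.log S / 2 := by
      rw [hεdef]; field_simp
    rw [this]
    calc Real.exp (Real.log S / 2) < Real.exp (Real.log S) :=
          Real.exp_lt_exp.2 (by linarith)
      _ = S := Real.exp_log (lt_trans one_pos hS1)
  exact absurd (main ε hε) (not_le.2 hbe)
end

section
/- Let f : ℝ^d → ℝ be convex and continuously differentiable, let ν be a (σ-finite) measure on ℝ^d, and for m > 0 define F_m := {z ∈ ℝ^d | ∫ exp(−m·D_f(z, x)) dν(x) < ∞}. Then (1) each set F_m is convex, and (2) the sets are increasing: if 0 < m ≤ n then F_m ⊆ F_n. -/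
/-!
Convexity of `f` makes the Bregman divergence nonnegative, so `exp (-n D) ≤ exp (-m D)` for
`m ≤ n`, which gives monotonicity. For convexity, `z ↦ D(z, x)` is affine up to a constant that
does not depend on `x`: `D(a z₁ + b z₂, x) = a D(z₁, x) + b D(z₂, x) + c`. The integrand at
`a z₁ + b z₂` is therefore a constant times `e₁ ^ a * e₂ ^ b`, whose integral Hölder's inequality
with exponents `1 / a`, `1 / b` bounds by `(∫ e₁) ^ a * (∫ e₂) ^ b`.
-/

open MeasureTheory

open scoped InnerProductSpace

section FirstOrderCondition

variable {E : Type*} [NormedAddCommGroup E] [NormedSpace ℝ E] {f : E → ℝ} {s : Set E}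

theorem ConvexOn.le_sub_of_hasFDerivAt {f' : E →L[ℝ] ℝ} {x y : E} (hf : ConvexOn ℝ s f)
    (hx : x ∈ s) (hy : y ∈ s) (hf' : HasFDerivAt f f' y) : f' (x - y) ≤ f x - f y := by
  have hline : ConvexOn ℝ (AffineMap.lineMap (k := ℝ) y x ⁻¹' s) (f ∘ AffineMap.lineMap y x) :=
    hf.comp_affineMap _
  have hderiv : HasDerivAt (f ∘ AffineMap.lineMap (k := ℝ) y x) (f' (x - y)) 0 := by
    refine HasFDerivAt.comp_hasDerivAt (0 : ℝ) ?_ AffineMap.hasDerivAt_lineMap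
    simpa using hf'
  simpa [slope] using hline.le_slope_of_hasDerivAt (x := 0) (y := 1) (by simpa) (by simpa)
    one_pos hderiv

end FirstOrderCondition

section Bregman

variable {F : Type*} [NormedAddCommGroup F] [InnerProductSpace ℝ F] [CompleteSpace F]

noncomputable def bregmanDiv (f : F → ℝ) (x y : F) : ℝ :=
  f x - f y - ⟪gradient f y, x - y⟫_ℝ

variable {f : F → ℝ}

theorem ConvexOn.inner_gradient_le_sub {s : Set F} {x y : F} (hf : ConvexOn ℝ s f) (hx : x ∈ s)
    (hy : y ∈ s) (hd : DifferentiableAt ℝ f y) : ⟪gradient f y, x - y⟫_ℝ ≤ f x - f y := by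
  simpa using hf.le_sub_of_hasFDerivAt hx hy
    (hasGradientAt_iff_hasFDerivAt.mp hd.hasGradientAt)

theorem bregmanDiv_nonneg (hf : ConvexOn ℝ Set.univ f) (hd : Differentiable ℝ f) (x y : F) :
    0 ≤ bregmanDiv f x y :=
  sub_nonneg.mpr (hf.inner_gradient_le_sub trivial trivial (hd y))

theorem bregmanDiv_convexComb (z₁ z₂ x : F) {a b : ℝ} (hab : a + b = 1) :
    bregmanDiv f (a • z₁ + b • z₂) x = a * bregmanDiv f z₁ x + b * bregmanDiv f z₂ x
      + (f (a • z₁ + b • z₂) - a * f z₁ - b * f z₂) := by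
  have hsub : a • z₁ + b • z₂ - x = a • (z₁ - x) + b • (z₂ - x) := by
    rw [smul_sub, smul_sub, sub_add_sub_comm, ← add_smul, hab, one_smul]
  simp only [bregmanDiv, hsub, inner_add_right, inner_smul_right]
  linear_combination f x * hab

theorem measurable_bregmanDiv [MeasurableSpace F] [BorelSpace F]
    [SecondCountableTopology F] (hf : Measurable f) (x : F) :
    Measurable (bregmanDiv f x) := by
  have hgrad : Measurable (gradient f) :=
    (InnerProductSpace.toDual ℝ F).symm.continuous.measurable.comp (measurable_fderiv ℝ f)
  exact (measurable_const.sub hf).sub (hgrad.inner (measurable_const.sub measurable_id))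

end Bregman

section ExpIntegral

open ENNReal Real

variable {α : Type*} [MeasurableSpace α] {μ : Measure α}

theorem lintegral_ofReal_exp_convexComb_le {g₁ g₂ : α → ℝ} (h₁ : AEMeasurable g₁ μ)
    (h₂ : AEMeasurable g₂ μ) {a b : ℝ} (ha : 0 ≤ a) (hb : 0 ≤ b) (hab : a + b = 1) :
    ∫⁻ x, ENNReal.ofReal (exp (a * g₁ x + b * g₂ x)) ∂μ ≤
      (∫⁻ x, ENNReal.ofReal (exp (g₁ x)) ∂μ) ^ a * (∫⁻ x, ENNReal.ofReal (exp (g₂ x)) ∂μ) ^ b := by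
  have hpow (x : α) : ENNReal.ofReal (exp (a * g₁ x + b * g₂ x))
      = ENNReal.ofReal (exp (g₁ x)) ^ a * ENNReal.ofReal (exp (g₂ x)) ^ b := by
    rw [ofReal_rpow_of_pos (exp_pos _), ofReal_rpow_of_pos (exp_pos _),
      ← ofReal_mul (by positivity), ← exp_mul, ← exp_mul, ← exp_add, mul_comm (g₁ x),
      mul_comm (g₂ x)]
  simp_rw [hpow]
  exact lintegral_mul_norm_pow_le (by fun_prop) (by fun_prop) ha hb hab

theorem convex_setOf_lintegral_ofReal_exp_lt_top {E : Type*} [AddCommGroup E] [Module ℝ E]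
    {φ : E → α → ℝ} (hφm : ∀ z, AEMeasurable (φ z) μ)
    (hφ : ∀ z₁ z₂ (a b : ℝ), 0 ≤ a → 0 ≤ b → a + b = 1 →
      ∃ c, ∀ x, φ (a • z₁ + b • z₂) x ≤ a * φ z₁ x + b * φ z₂ x + c) :
    Convex ℝ {z | ∫⁻ x, ENNReal.ofReal (exp (φ z x)) ∂μ < ⊤} := by
  intro z₁ hz₁ z₂ hz₂ a b ha hb hab
  obtain ⟨c, hc⟩ := hφ z₁ z₂ a b ha hb hab
  calc ∫⁻ x, ENNReal.ofReal (exp (φ (a • z₁ + b • z₂) x)) ∂μ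
      ≤ ∫⁻ x, ENNReal.ofReal (exp c) * ENNReal.ofReal (exp (a * φ z₁ x + b * φ z₂ x)) ∂μ := by
        refine lintegral_mono fun x => ?_
        rw [← ofReal_mul (exp_pos _).le, ← exp_add]
        gcongr
        linarith [hc x]
    _ = ENNReal.ofReal (exp c) * ∫⁻ x, ENNReal.ofReal (exp (a * φ z₁ x + b * φ z₂ x)) ∂μ :=
        lintegral_const_mul' _ _ ofReal_ne_top
    _ ≤ ENNReal.ofReal (exp c) * ((∫⁻ x, ENNReal.ofReal (exp (φ z₁ x)) ∂μ) ^ a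
          * (∫⁻ x, ENNReal.ofReal (exp (φ z₂ x)) ∂μ) ^ b) := by
        gcongr
        exact lintegral_ofReal_exp_convexComb_le (hφm z₁) (hφm z₂) ha hb hab
    _ < ⊤ := mul_lt_top ofReal_lt_top
        (mul_lt_top (rpow_lt_top_of_nonneg ha hz₁.ne) (rpow_lt_top_of_nonneg hb hz₂.ne))

end ExpIntegral

theorem finiteness_sets_convex_increasing_general {d : ℕ}
    (f : EuclideanSpace ℝ (Fin d) → ℝ)
    (hconv : ConvexOn ℝ Set.univ f) (hf : ContDiff ℝ 1 f)
    (D : EuclideanSpace ℝ (Fin d) → EuclideanSpace ℝ (Fin d) → ℝ)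
    (hD : ∀ x y, D x y = f x - f y - (inner ℝ (gradient f y) (x - y) : ℝ))
    (ν : Measure (EuclideanSpace ℝ (Fin d)))
    (F : ℝ → Set (EuclideanSpace ℝ (Fin d)))
    (hF : ∀ m, F m = {z | ∫⁻ x, ENNReal.ofReal (Real.exp (-(m * D z x))) ∂ν < ⊤}) :
    (∀ m : ℝ, 0 < m → Convex ℝ (F m)) ∧
    (∀ m n : ℝ, 0 < m → m ≤ n → F m ⊆ F n) := by
  obtain rfl : D = bregmanDiv f := funext₂ hD
  obtain rfl : F = fun m =>
      {z | ∫⁻ x, ENNReal.ofReal (Real.exp (-(m * bregmanDiv f z x))) ∂ν < ⊤} := funext hF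
  refine ⟨fun m _ => ?_, fun m n _ hmn z hz => ?_⟩
  · refine convex_setOf_lintegral_ofReal_exp_lt_top
      (fun z => ((measurable_bregmanDiv hf.continuous.measurable z).const_mul m).neg.aemeasurable)
      fun z₁ z₂ a b _ _ hab => ⟨-(m * (f (a • z₁ + b • z₂) - a * f z₁ - b * f z₂)), fun x => ?_⟩
    rw [bregmanDiv_convexComb z₁ z₂ x hab]
    linarith
  · refine lt_of_le_of_lt (lintegral_mono fun x => ?_) hz
    have hD_nonneg := bregmanDiv_nonneg hconv (hf.differentiable one_ne_zero) z x
    gcongr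

/-- Theorem 2 of the paper: for a convex continuously differentiable
function `f : ℝ^d → ℝ` with Bregman divergence `D`, and a σ-finite measure `ν` on `ℝ^d`,
the sets `F m = {z | ∫ exp(-m·D(z,x)) dν(x) < ∞}` are convex and increasing in `m`. -/
theorem finiteness_sets_convex_increasing {d : ℕ}
    (f : EuclideanSpace ℝ (Fin d) → ℝ)
    (hconv : ConvexOn ℝ Set.univ f) (hf : ContDiff ℝ 1 f)
    (D : EuclideanSpace ℝ (Fin d) → EuclideanSpace ℝ (Fin d) → ℝ)
    (hD : ∀ x y, D x y = f x - f y - (inner ℝ (gradient f y) (x - y) : ℝ))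
    (ν : Measure (EuclideanSpace ℝ (Fin d))) [SigmaFinite ν]
    (F : ℝ → Set (EuclideanSpace ℝ (Fin d)))
    (hF : ∀ m, F m = {z | ∫⁻ x, ENNReal.ofReal (Real.exp (-(m * D z x))) ∂ν < ⊤}) :
    (∀ m : ℝ, 0 < m → Convex ℝ (F m)) ∧
    (∀ m n : ℝ, 0 < m → m ≤ n → F m ⊆ F n) :=
  finiteness_sets_convex_increasing_general f hconv hf D hD ν F hF
end

section
/- Let μ and ν be finite measures on ℝ with ν ≠ 0. Then for ν-almost every x, the ratio (∫ exp(−n·(z − x)²/2) dμ(z)) / (∫ exp(−n·(z − x)²/2) dν(z)) converges, as n → ∞, to (dμ/dν)(x), the Radon–Nikodym derivative of the absolutely continuous part of μ with respect to ν. -/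
open MeasureTheory Filter Set Metric
open scoped ENNReal Topology

/-!
By the layer-cake formula, `∫ exp (-n (z - x)² / 2) dρ(z)` is the integral over `t ∈ (0, 1]` of
`ρ (closedBall x √(-2 log t / n))`, an average of the `ρ`-measures of balls whose radii shrink as
`n → ∞`. By Besicovitch's differentiation theorem, for `ν`-a.e. `x` and every `c` above (below)
`dμ/dν (x)` one has `μ (closedBall x r) ≤ c ν (closedBall x r)` (resp. `≥`) for all `r ≤ δ`. The
radii larger than `δ` only contribute `O(exp (-n δ² / 2))`, which is negligible against the
denominator `∫ exp (-n (z - x)² / 2) dν ≥ exp (-n δ² / 8) ν (closedBall x (δ / 2))`.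
-/

theorem ENNReal.tendsto_div_of_le_add_mul {ι : Type*} {l : Filter ι} {A B : ι → ℝ≥0∞}
    {L : ℝ≥0∞} (hB₀ : ∀ i, B i ≠ 0) (hB : ∀ i, B i ≠ ∞)
    (hup : ∀ c > L, ∃ E : ι → ℝ≥0∞, Tendsto E l (𝓝 0) ∧
      ∀ᶠ i in l, A i ≤ c * B i + E i * B i)
    (hlow : ∀ c < L, ∃ E : ι → ℝ≥0∞, Tendsto E l (𝓝 0) ∧
      ∀ᶠ i in l, c * B i ≤ A i + E i * B i) :
    Tendsto (fun i => A i / B i) l (𝓝 L) := by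
  refine tendsto_order.2 ⟨fun q hq => ?_, fun q hq => ?_⟩
  · obtain ⟨c, hqc, hcL⟩ := exists_between hq
    obtain ⟨E, hE, hA⟩ := hlow c hcL
    filter_upwards [hA, hE.eventually_lt_const (tsub_pos_of_lt hqc)] with i hAi hEi
    have hEB : E i * B i ≠ ∞ := ENNReal.mul_ne_top (hEi.trans_le tsub_le_self).ne_top (hB i)
    rw [ENNReal.lt_div_iff_mul_lt (Or.inl (hB₀ i)) (Or.inl (hB i)),
      ← ENNReal.add_lt_add_iff_right hEB, ← add_mul]
    exact (ENNReal.mul_lt_mul_left (hB₀ i) (hB i) (lt_tsub_iff_left.1 hEi)).trans_le hAi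
  · obtain ⟨c, hLc, hcq⟩ := exists_between hq
    obtain ⟨E, hE, hA⟩ := hup c hLc
    filter_upwards [hA, hE.eventually_lt_const (tsub_pos_of_lt hcq)] with i hAi hEi
    rw [← add_mul] at hAi
    rw [ENNReal.div_lt_iff (Or.inl (hB₀ i)) (Or.inl (hB i))]
    exact hAi.trans_lt (ENNReal.mul_lt_mul_left (hB₀ i) (hB i) (lt_tsub_iff_left.1 hEi))

theorem lintegral_ofReal_le_add_of_ae_superlevel_le {α : Type*} [MeasurableSpace α]
    {ρ₁ ρ₂ : Measure α} {f : α → ℝ} (hf₀ : ∀ z, 0 ≤ f z) (hf : Measurable f) {s : ℝ}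
    (hs : 0 ≤ s) (h : ∀ᵐ t, s < t → ρ₁ {z | t ≤ f z} ≤ ρ₂ {z | t ≤ f z}) :
    ∫⁻ z, ENNReal.ofReal (f z) ∂ρ₁
      ≤ ∫⁻ z, ENNReal.ofReal (f z) ∂ρ₂ + ρ₁ univ * ENNReal.ofReal s := by
  rw [lintegral_eq_lintegral_meas_le ρ₁ (ae_of_all _ hf₀) hf.aemeasurable,
    lintegral_eq_lintegral_meas_le ρ₂ (ae_of_all _ hf₀) hf.aemeasurable,
    ← Ioc_union_Ioi_eq_Ioi hs, lintegral_union measurableSet_Ioi Ioc_disjoint_Ioi_same,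
    add_comm]
  gcongr ?_ + ?_
  · calc ∫⁻ t in Ioi s, ρ₁ {z | t ≤ f z}
        ≤ ∫⁻ t in Ioi s, ρ₂ {z | t ≤ f z} :=
          setLIntegral_mono_ae' measurableSet_Ioi (h.mono fun t ht hst => ht hst)
      _ ≤ ∫⁻ t in Ioc 0 s ∪ Ioi s, ρ₂ {z | t ≤ f z} :=
          lintegral_mono_set subset_union_right
  · calc ∫⁻ t in Ioc 0 s, ρ₁ {z | t ≤ f z}
        ≤ ∫⁻ _ in Ioc 0 s, ρ₁ univ := lintegral_mono fun t => measure_mono (subset_univ _)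
      _ = ρ₁ univ * ENNReal.ofReal s := by rw [setLIntegral_const, Real.volume_Ioc, sub_zero]

noncomputable def gaussianKernel (a x z : ℝ) : ℝ := Real.exp (-(a * (z - x) ^ 2 / 2))

section GaussianKernel

variable {a x : ℝ}

theorem gaussianKernel_le_one (ha : 0 ≤ a) (z : ℝ) : gaussianKernel a x z ≤ 1 :=
  Real.exp_le_one_iff.2 (by have := mul_nonneg ha (sq_nonneg (z - x)); linarith)

@[fun_prop]
theorem measurable_gaussianKernel : Measurable (gaussianKernel a x) := by
  unfold gaussianKernel; fun_prop

theorem setOf_le_gaussianKernel_eq_closedBall (ha : 0 < a) {t : ℝ} (ht₀ : 0 < t)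
    (ht₁ : t ≤ 1) :
    {z | t ≤ gaussianKernel a x z} = closedBall x √(2 * -Real.log t / a) := by
  have hlog : 0 ≤ -Real.log t := neg_nonneg.2 (Real.log_nonpos ht₀.le ht₁)
  ext z
  rw [mem_ofPred_eq, mem_closedBall, Real.dist_eq, gaussianKernel, ← Real.log_le_iff_le_exp ht₀,
    Real.le_sqrt (abs_nonneg _) (by positivity), sq_abs, le_div_iff₀ ha]
  constructor <;> intro h <;> linarith

theorem setOf_le_gaussianKernel_eq_empty (ha : 0 ≤ a) {t : ℝ} (ht : 1 < t) :
    {z | t ≤ gaussianKernel a x z} = ∅ :=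
  eq_empty_of_forall_notMem fun z hz => (gaussianKernel_le_one ha z).not_gt (ht.trans_le hz)

theorem lintegral_gaussianKernel_le_measure_univ (ρ : Measure ℝ) (ha : 0 ≤ a) :
    ∫⁻ z, ENNReal.ofReal (gaussianKernel a x z) ∂ρ ≤ ρ univ :=
  (lintegral_mono fun z => ENNReal.ofReal_le_one.2 (gaussianKernel_le_one ha z)).trans_eq
    lintegral_one

theorem ofReal_exp_mul_measure_closedBall_le_lintegral_gaussianKernel (ρ : Measure ℝ)
    (ha : 0 ≤ a) (r : ℝ) :
    ENNReal.ofReal (Real.exp (-(a * r ^ 2 / 2))) * ρ (closedBall x r)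
      ≤ ∫⁻ z, ENNReal.ofReal (gaussianKernel a x z) ∂ρ := by
  rw [← setLIntegral_const]
  refine (setLIntegral_mono (by fun_prop) fun z hz => ?_).trans (setLIntegral_le_lintegral _ _)
  have hzr : (z - x) ^ 2 ≤ r ^ 2 := sq_le_sq' (abs_le.1 hz).1 (abs_le.1 hz).2
  unfold gaussianKernel
  gcongr

theorem lintegral_gaussianKernel_le_add {ρ₁ ρ₂ : Measure ℝ} {δ : ℝ} (ha : 0 < a) (hδ : 0 < δ)
    (h : ∀ r ∈ Ioc 0 δ, ρ₁ (closedBall x r) ≤ ρ₂ (closedBall x r)) :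
    ∫⁻ z, ENNReal.ofReal (gaussianKernel a x z) ∂ρ₁
      ≤ ∫⁻ z, ENNReal.ofReal (gaussianKernel a x z) ∂ρ₂
        + ρ₁ univ * ENNReal.ofReal (Real.exp (-(a * δ ^ 2 / 2))) := by
  refine lintegral_ofReal_le_add_of_ae_superlevel_le (f := gaussianKernel a x)
    (fun z => (Real.exp_pos _).le) measurable_gaussianKernel (Real.exp_pos _).le ?_
  -- at `t = 1` the superlevel set is the degenerate ball `{x}`, not covered by `h`
  filter_upwards [Measure.ae_ne volume 1] with t ht₁ hst
  rcases ht₁.lt_or_gt with ht₁ | ht₁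
  · have ht₀ : 0 < t := (Real.exp_pos _).trans hst
    have hlog : -(a * δ ^ 2 / 2) < Real.log t := (Real.lt_log_iff_exp_lt ht₀).2 hst
    have hlog' : 0 < -Real.log t := neg_pos.2 (Real.log_neg ht₀ ht₁)
    rw [setOf_le_gaussianKernel_eq_closedBall ha ht₀ ht₁.le]
    refine h _ ⟨Real.sqrt_pos.2 (by positivity), Real.sqrt_le_iff.2 ⟨hδ.le, ?_⟩⟩
    rw [div_le_iff₀ ha]
    linarith
  · simp [setOf_le_gaussianKernel_eq_empty ha.le ht₁]

theorem exists_tendsto_zero_lintegral_gaussianKernel_le_add_mul {ρ₁ ρ₂ ν : Measure ℝ}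
    [IsFiniteMeasure ν] {δ : ℝ} (hδ : 0 < δ) (hρ₁ : ρ₁ univ ≠ ∞)
    (hν : ν (closedBall x (δ / 2)) ≠ 0)
    (h : ∀ r ∈ Ioc 0 δ, ρ₁ (closedBall x r) ≤ ρ₂ (closedBall x r)) :
    ∃ E : ℕ → ℝ≥0∞, Tendsto E atTop (𝓝 0) ∧ ∀ᶠ n : ℕ in atTop,
      ∫⁻ z, ENNReal.ofReal (gaussianKernel n x z) ∂ρ₁
        ≤ ∫⁻ z, ENNReal.ofReal (gaussianKernel n x z) ∂ρ₂
          + E n * ∫⁻ z, ENNReal.ofReal (gaussianKernel n x z) ∂ν := by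
  set w := ν (closedBall x (δ / 2))
  refine ⟨fun n => ρ₁ univ / w * ENNReal.ofReal (Real.exp (-(3 * δ ^ 2 / 8 * n))), ?_, ?_⟩
  · have hexp : Tendsto (fun n : ℕ => Real.exp (-(3 * δ ^ 2 / 8 * n))) atTop (𝓝 0) :=
      Real.tendsto_exp_neg_atTop_nhds_zero.comp
        (tendsto_natCast_atTop_atTop.const_mul_atTop (by positivity))
    simpa using ENNReal.Tendsto.const_mul (ENNReal.tendsto_ofReal hexp)
      (Or.inr (ENNReal.div_ne_top hρ₁ hν))
  · filter_upwards [eventually_gt_atTop 0] with n hn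
    refine (lintegral_gaussianKernel_le_add (Nat.cast_pos.2 hn) hδ h).trans
      (add_le_add le_rfl ?_)
    have hsplit : Real.exp (-(n * δ ^ 2 / 2))
        = Real.exp (-(3 * δ ^ 2 / 8 * n)) * Real.exp (-(n * (δ / 2) ^ 2 / 2)) := by
      rw [← Real.exp_add]; ring_nf
    calc ρ₁ univ * ENNReal.ofReal (Real.exp (-(n * δ ^ 2 / 2)))
        = ρ₁ univ / w * ENNReal.ofReal (Real.exp (-(3 * δ ^ 2 / 8 * n)))
            * (ENNReal.ofReal (Real.exp (-(n * (δ / 2) ^ 2 / 2))) * w) := by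
          rw [hsplit, ENNReal.ofReal_mul (Real.exp_pos _).le]
          nth_rw 1 [← ENNReal.div_mul_cancel hν (measure_ne_top ν _) (b := ρ₁ univ)]
          ring
      _ ≤ _ := by
          gcongr
          exact ofReal_exp_mul_measure_closedBall_le_lintegral_gaussianKernel ν n.cast_nonneg _

end GaussianKernel

section LocalComparison

variable {X : Type*} [PseudoMetricSpace X] [MeasurableSpace X] {μ ν : Measure X}
  {x : X} {L c : ℝ≥0∞}

theorem measure_closedBall_pos_of_mem_support (hx : x ∈ ν.support) {r : ℝ}
    (hr : 0 < r) : 0 < ν (closedBall x r) :=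
  (ν.mem_support_iff_forall x).1 hx _ (closedBall_mem_nhds x hr)

variable [IsFiniteMeasure ν]

theorem exists_measure_closedBall_le_smul (hx : x ∈ ν.support)
    (h : Tendsto (fun r => μ (closedBall x r) / ν (closedBall x r)) (𝓝[>] 0) (𝓝 L))
    (hc : L < c) :
    ∃ δ > 0, ∀ r ∈ Ioc 0 δ, μ (closedBall x r) ≤ (c • ν) (closedBall x r) := by
  obtain ⟨δ, hδ, hsub⟩ := mem_nhdsGT_iff_exists_Ioc_subset.1 (h.eventually_lt_const hc)
  refine ⟨δ, hδ, fun r hr => ?_⟩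
  rw [Measure.smul_apply, smul_eq_mul, ← ENNReal.div_le_iff
    (measure_closedBall_pos_of_mem_support hx hr.1).ne' (measure_ne_top ν _)]
  exact (hsub hr).le

theorem exists_smul_measure_closedBall_le (hx : x ∈ ν.support)
    (h : Tendsto (fun r => μ (closedBall x r) / ν (closedBall x r)) (𝓝[>] 0) (𝓝 L))
    (hc : c < L) :
    ∃ δ > 0, ∀ r ∈ Ioc 0 δ, (c • ν) (closedBall x r) ≤ μ (closedBall x r) := by
  obtain ⟨δ, hδ, hsub⟩ := mem_nhdsGT_iff_exists_Ioc_subset.1 (h.eventually_const_lt hc)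
  refine ⟨δ, hδ, fun r hr => ?_⟩
  rw [Measure.smul_apply, smul_eq_mul, ← ENNReal.le_div_iff_mul_le
    (Or.inl (measure_closedBall_pos_of_mem_support hx hr.1).ne')
    (Or.inl (measure_ne_top ν _))]
  exact (hsub hr).le

end LocalComparison

theorem tendsto_lintegral_gaussianKernel_div (μ ν : Measure ℝ) [IsFiniteMeasure μ]
    [IsFiniteMeasure ν] {x : ℝ} {L : ℝ≥0∞} (hx : x ∈ ν.support)
    (h : Tendsto (fun r => μ (closedBall x r) / ν (closedBall x r)) (𝓝[>] 0) (𝓝 L)) :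
    Tendsto (fun n : ℕ => (∫⁻ z, ENNReal.ofReal (gaussianKernel n x z) ∂μ)
      / ∫⁻ z, ENNReal.ofReal (gaussianKernel n x z) ∂ν) atTop (𝓝 L) := by
  have hB₀ (n : ℕ) : ∫⁻ z, ENNReal.ofReal (gaussianKernel n x z) ∂ν ≠ 0 :=
    (lt_of_lt_of_le (ENNReal.mul_pos (by simp [Real.exp_pos])
      (measure_closedBall_pos_of_mem_support hx one_pos).ne')
      (ofReal_exp_mul_measure_closedBall_le_lintegral_gaussianKernel ν n.cast_nonneg 1)).ne'
  have hB (n : ℕ) : ∫⁻ z, ENNReal.ofReal (gaussianKernel n x z) ∂ν ≠ ∞ :=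
    ((lintegral_gaussianKernel_le_measure_univ ν n.cast_nonneg).trans_lt
      (measure_lt_top ν _)).ne
  have hw {δ : ℝ} (hδ : 0 < δ) : ν (closedBall x (δ / 2)) ≠ 0 :=
    (measure_closedBall_pos_of_mem_support hx (half_pos hδ)).ne'
  refine ENNReal.tendsto_div_of_le_add_mul hB₀ hB (fun c hc => ?_) (fun c hc => ?_)
  · obtain ⟨δ, hδ, hcomp⟩ := exists_measure_closedBall_le_smul hx h hc
    simpa only [lintegral_smul_measure, smul_eq_mul] using
      exists_tendsto_zero_lintegral_gaussianKernel_le_add_mul hδ (measure_ne_top μ _) (hw hδ) hcomp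
  · obtain ⟨δ, hδ, hcomp⟩ := exists_smul_measure_closedBall_le hx h hc
    have hcν : (c • ν) univ ≠ ∞ := ENNReal.mul_ne_top hc.ne_top (measure_ne_top ν _)
    simpa only [lintegral_smul_measure, smul_eq_mul] using
      exists_tendsto_zero_lintegral_gaussianKernel_le_add_mul hδ hcν (hw hδ) hcomp

theorem gaussian_posterior_ratio_tendsto_rnDeriv_general
    (μ ν : Measure ℝ) [IsFiniteMeasure μ] [IsFiniteMeasure ν] :
    ∀ᵐ x ∂ν, Tendsto
      (fun n : ℕ =>
        (∫ z, Real.exp (-((n : ℝ) * (z - x) ^ 2 / 2)) ∂μ) /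
          (∫ z, Real.exp (-((n : ℝ) * (z - x) ^ 2 / 2)) ∂ν))
      atTop (nhds ((μ.rnDeriv ν x).toReal)) := by
  filter_upwards [Besicovitch.ae_tendsto_rnDeriv μ ν, μ.rnDeriv_lt_top ν,
    Measure.support_mem_ae] with x hratio hfin hx
  have hint (ρ : Measure ℝ) (n : ℕ) : ∫ z, gaussianKernel n x z ∂ρ
      = (∫⁻ z, ENNReal.ofReal (gaussianKernel n x z) ∂ρ).toReal :=
    integral_eq_lintegral_of_nonneg_ae (ae_of_all _ fun z => (Real.exp_pos _).le)
      measurable_gaussianKernel.aestronglyMeasurable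
  refine ((ENNReal.tendsto_toReal hfin.ne).comp
    (tendsto_lintegral_gaussianKernel_div μ ν hx hratio)).congr fun n => ?_
  simp only [Function.comp_apply, ENNReal.toReal_div, ← hint]
  rfl

/-- for finite measures `μ`, `ν` on `ℝ` with `ν ≠ 0`, for `ν`-almost every
`x` the ratio of Gaussian posterior-normalization integrals
`(∫ exp(-n·(z-x)²/2) dμ(z)) / (∫ exp(-n·(z-x)²/2) dν(z))` converges, as `n → ∞`, to the
Radon–Nikodym derivative at `x` of the absolutely continuous part of `μ` w.r.t. `ν`. -/
theorem gaussian_posterior_ratio_tendsto_rnDeriv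
    (μ ν : Measure ℝ) [IsFiniteMeasure μ] [IsFiniteMeasure ν] (hν : ν ≠ 0) :
    ∀ᵐ x ∂ν, Tendsto
      (fun n : ℕ =>
        (∫ z, Real.exp (-((n : ℝ) * (z - x) ^ 2 / 2)) ∂μ) /
          (∫ z, Real.exp (-((n : ℝ) * (z - x) ^ 2 / 2)) ∂ν))
      atTop (nhds ((μ.rnDeriv ν x).toReal)) :=
  gaussian_posterior_ratio_tendsto_rnDeriv_general μ ν
end
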